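/- Let k ≥ 2 and r ≥ 1 be integers. A real number λ is an eigenvalue of the adjacency matrix of the k-ary rooted tree X_r^k if and only if λ is a root of P^k_s for some s with 2 ≤ s ≤ r+2. -/
import Mathlib


open Polynomial

/-- Vertices of the rooted tree of depth `r` in which each vertex at depth `i < r`
has `b i` children: a vertex is a word assigning to each position `i < m ≤ r`
a letter in `Fin (b i)`; the empty word (`m = 0`) is the root, and the depth of a
vertex is its length `m`. -/
abbrev BVertex (b : ℕ → ℕ) (r : ℕ) := Σ m : Fin (r + 1), (i : Fin (m : ℕ)) → Fin (b i)

/-- `y` is a child of `x`: the word `y` extends the word `x` by one letter. -/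
def BExt {b : ℕ → ℕ} {r : ℕ} (x y : BVertex b r) : Prop :=
  ∃ h : (y.1 : ℕ) = (x.1 : ℕ) + 1,
    ∀ i : Fin (x.1 : ℕ), y.2 ⟨(i : ℕ), by have := i.isLt; omega⟩ = x.2 i

/-- Adjacency in the rooted tree: the parent/child relation. -/
def BAdj {b : ℕ → ℕ} {r : ℕ} (x y : BVertex b r) : Prop := BExt x y ∨ BExt y x

open Classical in
/-- Adjacency matrix of the rooted tree with branching sequence `b` and depth `r`. -/
noncomputable def BAdjMatrix (b : ℕ → ℕ) (r : ℕ) : Matrix (BVertex b r) (BVertex b r) ℝ :=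
  fun x y => if BAdj x y then 1 else 0

/-- `lam` is an eigenvalue of the adjacency matrix of the tree. -/
def IsAdjEigenvalue (b : ℕ → ℕ) (r : ℕ) (lam : ℝ) : Prop :=
  ∃ v : BVertex b r → ℝ, v ≠ 0 ∧ (BAdjMatrix b r).mulVec v = lam • v

/-- Dimension of the `lam`-eigenspace of the adjacency matrix of the tree. -/
noncomputable def adjEigDim (b : ℕ → ℕ) (r : ℕ) (lam : ℝ) : ℕ :=
  Module.finrank ℝ
    (LinearMap.ker ((BAdjMatrix b r).mulVecLin - lam • LinearMap.id))

/-- The generalized Fibonacci polynomials `P^k_n ∈ ℝ[x]`: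
`P^k_0 = 0`, `P^k_1 = 1`, `P^k_n = x·P^k_{n-1} − k·P^k_{n-2}`. -/
noncomputable def Ppoly (k : ℕ) : ℕ → Polynomial ℝ
  | 0 => 0
  | 1 => 1
  | n + 2 => X * Ppoly k (n + 1) - C (k : ℝ) * Ppoly k n

section Tree
variable {k r : ℕ}

/-- parent of a non-root vertex -/
def par (x : BVertex (fun _ => k) r) (hm : 0 < (x.1 : ℕ)) : BVertex (fun _ => k) r :=
  ⟨⟨(x.1 : ℕ) - 1, by have := x.1.isLt; omega⟩,
    fun i => x.2 ⟨(i : ℕ), by have := i.isLt; simp only [Fin.val_mk] at this; omega⟩⟩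

/-- child of a non-leaf vertex with last letter `a` -/
def chld (x : BVertex (fun _ => k) r) (hm : (x.1 : ℕ) < r) (a : Fin k) :
    BVertex (fun _ => k) r :=
  ⟨⟨(x.1 : ℕ) + 1, by omega⟩,
    fun i => if h : (i : ℕ) < (x.1 : ℕ) then x.2 ⟨(i : ℕ), h⟩ else a⟩

@[simp] lemma par_fst (x : BVertex (fun _ => k) r) (hm) :
    ((par x hm).1 : ℕ) = (x.1 : ℕ) - 1 := rfl

@[simp] lemma chld_fst (x : BVertex (fun _ => k) r) (hm) (a : Fin k) :
    ((chld x hm a).1 : ℕ) = (x.1 : ℕ) + 1 := rfl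

lemma bext_iff (x y : BVertex (fun _ => k) r) :
    BExt x y ↔ ∃ (hm : (x.1 : ℕ) < r) (a : Fin k), y = chld x hm a := by
  constructor
  · rintro ⟨h, hw⟩
    have hm : (x.1 : ℕ) < r := by have := y.1.isLt; omega
    refine ⟨hm, y.2 ⟨(x.1 : ℕ), by omega⟩, ?_⟩
    refine Sigma.ext (Fin.ext (by simp [h])) ?_
    rw [Fin.heq_fun_iff (by simp [h])]
    intro i
    simp only [chld]
    by_cases hi : (i : ℕ) < (x.1 : ℕ)
    · rw [dif_pos hi]
      exact (congrArg y.2 (Fin.ext rfl)).trans (hw ⟨(i : ℕ), hi⟩)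
    · have hi' : (i : ℕ) = (x.1 : ℕ) := by have := i.isLt; simp only [Fin.val_mk] at this; omega
      rw [dif_neg (by omega)]
      exact congrArg y.2 (Fin.ext hi')
  · rintro ⟨hm, a, rfl⟩
    refine ⟨rfl, fun i => ?_⟩
    simp only [chld]
    rw [dif_pos i.isLt]

lemma bext_par_iff (x y : BVertex (fun _ => k) r) :
    BExt y x ↔ ∃ (hm : 0 < (x.1 : ℕ)), y = par x hm := by
  constructor
  · rintro ⟨h, hw⟩
    have hm : 0 < (x.1 : ℕ) := by omega
    refine ⟨hm, Sigma.ext (Fin.ext (by simp [h])) ?_⟩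
    rw [Fin.heq_fun_iff (by simp [h])]
    intro i
    exact (hw i).symm.trans (congrArg x.2 (Fin.ext rfl))
  · rintro ⟨hm, rfl⟩
    exact ⟨by simp only [par_fst]; omega, fun i => rfl⟩

lemma chld_inj (x : BVertex (fun _ => k) r) (hm) :
    Function.Injective (chld x hm) := by
  intro a a' h
  have h3 : (chld x hm a).2 = (chld x hm a').2 :=
    eq_of_heq (Sigma.mk.inj_iff.mp h).2
  have h4 := congrFun h3 ⟨(x.1 : ℕ), Nat.lt_succ_self _⟩
  simpa [chld] using h4

lemma par_chld (x : BVertex (fun _ => k) r) (hm) (a : Fin k) (h') :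
    par (chld x hm a) h' = x := by
  refine Sigma.ext (Fin.ext (by simp)) ?_
  rw [Fin.heq_fun_iff (by simp)]
  intro i
  simp only [par, chld]
  rw [dif_pos (by exact i.isLt)]

lemma sum_adj (v : BVertex (fun _ => k) r → ℝ) (x : BVertex (fun _ => k) r) :
    (BAdjMatrix (fun _ => k) r).mulVec v x =
      (if hm : 0 < (x.1 : ℕ) then v (par x hm) else 0) +
      (if hm : (x.1 : ℕ) < r then ∑ a : Fin k, v (chld x hm a) else 0) := by
  classical
  have expand : (BAdjMatrix (fun _ => k) r).mulVec v x
      = ∑ y : BVertex (fun _ => k) r, (if BExt y x then v y else 0)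
        + ∑ y : BVertex (fun _ => k) r, (if BExt x y then v y else 0) := by
    rw [Matrix.mulVec, dotProduct]
    rw [← Finset.sum_add_distrib]
    refine Finset.sum_congr rfl fun y _ => ?_
    simp only [BAdjMatrix, BAdj]
    by_cases h1 : BExt x y
    · have h2 : ¬ BExt y x := by
        rintro ⟨h2, -⟩; obtain ⟨h1, -⟩ := h1; omega
      simp [h1, h2]
    · by_cases h2 : BExt y x
      · simp [h1, h2]
      · simp [h1, h2]
  rw [expand]
  congr 1
  · by_cases hm : 0 < (x.1 : ℕ)
    · rw [dif_pos hm]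
      rw [Fintype.sum_eq_single (par x hm)]
      · rw [if_pos ((bext_par_iff x _).mpr ⟨hm, rfl⟩)]
      · intro y hy
        rw [if_neg]
        intro hB
        obtain ⟨hm', rfl⟩ := (bext_par_iff x y).mp hB
        exact hy rfl
    · rw [dif_neg hm]
      refine Finset.sum_eq_zero fun y _ => ?_
      rw [if_neg]
      rintro ⟨h, -⟩; omega
  · by_cases hm : (x.1 : ℕ) < r
    · rw [dif_pos hm]
      rw [← Finset.sum_filter]
      have himg : Finset.univ.filter (fun y => BExt x y)
          = Finset.univ.image (chld x hm) := by
        ext y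
        simp only [Finset.mem_filter, Finset.mem_univ, true_and, Finset.mem_image]
        rw [bext_iff]
        constructor
        · rintro ⟨hm', a, rfl⟩; exact ⟨a, rfl⟩
        · rintro ⟨a, rfl⟩; exact ⟨hm, a, rfl⟩
      rw [himg, Finset.sum_image (fun a _ a' _ h => chld_inj x hm h)]
    · rw [dif_neg hm]
      refine Finset.sum_eq_zero fun y _ => ?_
      rw [if_neg]
      intro hB
      obtain ⟨hm', a, rfl⟩ := (bext_iff x y).mp hB
      exact hm hm'

end Tree

section Tree2
variable {k r : ℕ} {lam : ℝ}

lemma peval0 : (Ppoly k 0).eval lam = 0 := by simp [Ppoly]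
lemma peval1 : (Ppoly k 1).eval lam = 1 := by simp [Ppoly]
lemma pevalrec (n : ℕ) : (Ppoly k (n+2)).eval lam
    = lam * (Ppoly k (n+1)).eval lam - k * (Ppoly k n).eval lam := by
  rw [show Ppoly k (n+2) = X * Ppoly k (n+1) - C (k:ℝ) * Ppoly k n from rfl]
  simp

lemma radial_eigen (hk : 1 ≤ k) (hr : 1 ≤ r)
    (hroot : (Ppoly k (r+2)).eval lam = 0) : IsAdjEigenvalue (fun _ => k) r lam := by
  have hk' : 0 < (fun _ : ℕ => k) 0 := hk
  refine ⟨fun x => (Ppoly k (r + 1 - (x.1 : ℕ))).eval lam, ?_, ?_⟩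
  · intro hz
    have h1 := congrFun hz (⟨⟨r, by omega⟩, fun i => ⟨0, by show 0 < k; omega⟩⟩ :
      BVertex (fun _ => k) r)
    simp only [Pi.zero_apply] at h1
    have h2 : (Ppoly k (r + 1 - r)).eval lam = 0 := h1
    rw [show r + 1 - r = 1 by omega, peval1] at h2
    norm_num at h2
  · funext x
    rw [sum_adj]
    simp only [Pi.smul_apply, smul_eq_mul]
    have hx := x.1.isLt
    rw [show (if hm' : (x.1:ℕ) < r
          then ∑ a : Fin k, (Ppoly k (r + 1 - ((chld x hm' a).1 : ℕ))).eval lam else 0)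
        = (if (x.1:ℕ) < r then (k : ℝ) * (Ppoly k (r - (x.1:ℕ))).eval lam else 0) by
      by_cases hm' : (x.1:ℕ) < r
      · rw [dif_pos hm', if_pos hm']
        rw [Finset.sum_congr rfl (fun a _ => by
          rw [chld_fst, show r + 1 - ((x.1:ℕ) + 1) = r - (x.1:ℕ) from by omega])]
        rw [Finset.sum_const, Finset.card_univ, Fintype.card_fin, nsmul_eq_mul]
      · rw [dif_neg hm', if_neg hm']]
    rw [show (if hm' : 0 < (x.1:ℕ) then (Ppoly k (r + 1 - ((par x hm').1 : ℕ))).eval lam else 0)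
        = (if 0 < (x.1:ℕ) then (Ppoly k (r + 2 - (x.1:ℕ))).eval lam else 0) by
      by_cases hm' : 0 < (x.1:ℕ)
      · rw [dif_pos hm', if_pos hm']
        congr 2
        rw [par_fst]
        omega
      · rw [dif_neg hm', if_neg hm']]
    generalize hm : (x.1 : ℕ) = m at hx ⊢
    rcases Nat.lt_or_ge m r with hmr | hmr
    · rcases Nat.eq_zero_or_pos m with h0 | h0
      · subst h0
        rw [if_neg (lt_irrefl 0), if_pos hmr]
        have hre := pevalrec (k := k) (lam := lam) r
        rw [hroot] at hre
        rw [show r + 1 - 0 = r + 1 by omega, show r - 0 = r by omega]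
        linarith
      · rw [if_pos h0, if_pos hmr]
        have hre := pevalrec (k := k) (lam := lam) (r - m)
        rw [show r - m + 2 = r + 2 - m by omega, show r - m + 1 = r + 1 - m by omega] at hre
        linarith
    · have hmr' : m = r := by omega
      subst hmr'
      rw [if_pos (show 0 < m from hr), if_neg (lt_irrefl m)]
      have hre := pevalrec (k := k) (lam := lam) 0
      rw [show (0:ℕ)+2 = 2 by omega, show (0:ℕ)+1 = 1 by omega, peval0, peval1] at hre
      rw [show m + 1 - m = 1 by omega, show m + 2 - m = 2 by omega, peval1]
      linarith
end Tree2

section Tree3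
variable {k r : ℕ}

lemma chld_snd_lt (x : BVertex (fun _ => k) r) (hm) (a : Fin k) (i : ℕ)
    (hi : i < (x.1 : ℕ)) (pf : i < ((chld x hm a).1 : ℕ)) :
    (chld x hm a).2 ⟨i, pf⟩ = x.2 ⟨i, hi⟩ := dif_pos hi

lemma chld_snd_ge (x : BVertex (fun _ => k) r) (hm) (a : Fin k) (i : ℕ)
    (hi : ¬ i < (x.1 : ℕ)) (pf : i < ((chld x hm a).1 : ℕ)) :
    (chld x hm a).2 ⟨i, pf⟩ = a := dif_neg hi

lemma par_snd (x : BVertex (fun _ => k) r) (hm) (i : ℕ)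
    (hi : i < (x.1 : ℕ)) (pf : i < ((par x hm).1 : ℕ)) :
    (par x hm).2 ⟨i, pf⟩ = x.2 ⟨i, hi⟩ := rfl

open Classical in
/-- weight function for the two-sibling eigenvector construction -/
noncomputable def Af (k r d0 : ℕ) (hd1 : 1 ≤ d0) (x : BVertex (fun _ => k) r) : ℝ :=
  if hd : d0 ≤ (x.1 : ℕ) then
    (if ∀ (i : ℕ) (pf : i < (x.1 : ℕ)), i < d0 - 1 → (x.2 ⟨i, pf⟩ : ℕ) = 0 then
      ((if (x.2 ⟨d0 - 1, by omega⟩ : Fin k).1 = 0 then (1:ℝ) else 0) -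
       (if (x.2 ⟨d0 - 1, by omega⟩ : Fin k).1 = 1 then (1:ℝ) else 0))
     else 0)
  else 0

variable {d0 : ℕ} {hd1 : 1 ≤ d0}

lemma Af_low (x : BVertex (fun _ => k) r) (hx : (x.1 : ℕ) < d0) :
    Af k r d0 hd1 x = 0 := dif_neg (by omega)

lemma Af_chld (x : BVertex (fun _ => k) r) (hx : d0 ≤ (x.1 : ℕ)) (hm) (a : Fin k) :
    Af k r d0 hd1 (chld x hm a) = Af k r d0 hd1 x := by
  rw [Af, Af, dif_pos hx, dif_pos (show d0 ≤ ((chld x hm a).1 : ℕ) by rw [chld_fst]; omega)]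
  have hcond : (∀ (i : ℕ) (pf : i < ((chld x hm a).1 : ℕ)), i < d0 - 1 →
        ((chld x hm a).2 ⟨i, pf⟩ : ℕ) = 0)
      ↔ (∀ (i : ℕ) (pf : i < (x.1 : ℕ)), i < d0 - 1 → (x.2 ⟨i, pf⟩ : ℕ) = 0) := by
    constructor
    · intro hc i pf hi
      have h2 := hc i (by rw [chld_fst]; omega) hi
      rwa [chld_snd_lt x hm a i pf] at h2
    · intro hc i pf hi
      have hilt : i < (x.1 : ℕ) := by omega
      rw [chld_snd_lt x hm a i hilt]
      exact hc i hilt hi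
  rw [if_congr hcond rfl rfl]
  rw [chld_snd_lt x hm a (d0 - 1) (by omega)]

lemma Af_par (x : BVertex (fun _ => k) r) (hx : d0 + 1 ≤ (x.1 : ℕ)) (hm) :
    Af k r d0 hd1 (par x hm) = Af k r d0 hd1 x := by
  rw [Af, Af, dif_pos (show d0 ≤ (x.1 : ℕ) by omega),
    dif_pos (show d0 ≤ ((par x hm).1 : ℕ) by rw [par_fst]; omega)]
  have hcond : (∀ (i : ℕ) (pf : i < ((par x hm).1 : ℕ)), i < d0 - 1 →
        ((par x hm).2 ⟨i, pf⟩ : ℕ) = 0)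
      ↔ (∀ (i : ℕ) (pf : i < (x.1 : ℕ)), i < d0 - 1 → (x.2 ⟨i, pf⟩ : ℕ) = 0) := by
    constructor
    · intro hc i pf hi
      have h2 := hc i (by rw [par_fst]; omega) hi
      rwa [par_snd x hm i pf] at h2
    · intro hc i pf hi
      have hilt : i < (x.1 : ℕ) := by omega
      rw [par_snd x hm i hilt]
      exact hc i hilt hi
  rw [if_congr hcond rfl rfl]
  rw [par_snd x hm (d0 - 1) (by omega)]

lemma Af_sum_chld (hk : 2 ≤ k) (x : BVertex (fun _ => k) r)
    (hx : (x.1 : ℕ) + 1 = d0) (hm) :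
    ∑ a : Fin k, Af k r d0 hd1 (chld x hm a) = 0 := by
  have key : ∀ a : Fin k, Af k r d0 hd1 (chld x hm a)
      = (if ∀ (i : ℕ) (pf : i < (x.1 : ℕ)), i < d0 - 1 → (x.2 ⟨i, pf⟩ : ℕ) = 0 then
          ((if (a : ℕ) = 0 then (1:ℝ) else 0) - (if (a : ℕ) = 1 then (1:ℝ) else 0))
         else 0) := by
    intro a
    rw [Af, dif_pos (show d0 ≤ ((chld x hm a).1 : ℕ) by rw [chld_fst]; omega)]
    have hcond : (∀ (i : ℕ) (pf : i < ((chld x hm a).1 : ℕ)), i < d0 - 1 →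
          ((chld x hm a).2 ⟨i, pf⟩ : ℕ) = 0)
        ↔ (∀ (i : ℕ) (pf : i < (x.1 : ℕ)), i < d0 - 1 → (x.2 ⟨i, pf⟩ : ℕ) = 0) := by
      constructor
      · intro hc i pf hi
        have h2 := hc i (by rw [chld_fst]; omega) hi
        rwa [chld_snd_lt x hm a i pf] at h2
      · intro hc i pf hi
        have hilt : i < (x.1 : ℕ) := by omega
        rw [chld_snd_lt x hm a i hilt]
        exact hc i hilt hi
    rw [if_congr hcond rfl rfl]
    rw [chld_snd_ge x hm a (d0 - 1) (by omega)]
  rw [Finset.sum_congr rfl (fun a _ => key a)]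
  by_cases hc : ∀ (i : ℕ) (pf : i < (x.1 : ℕ)), i < d0 - 1 → (x.2 ⟨i, pf⟩ : ℕ) = 0
  · rw [Finset.sum_congr rfl (fun a _ => if_pos hc)]
    rw [Finset.sum_sub_distrib]
    have e0 : ∀ a : Fin k, (if (a : ℕ) = 0 then (1:ℝ) else 0)
        = (if a = (⟨0, by omega⟩ : Fin k) then (1:ℝ) else 0) := by
      intro a; congr 1; simp [Fin.ext_iff]
    have e1 : ∀ a : Fin k, (if (a : ℕ) = 1 then (1:ℝ) else 0)
        = (if a = (⟨1, by omega⟩ : Fin k) then (1:ℝ) else 0) := by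
      intro a; congr 1; simp [Fin.ext_iff]
    rw [Finset.sum_congr rfl (fun a _ => e0 a), Finset.sum_congr rfl (fun a _ => e1 a),
      Finset.sum_ite_eq' Finset.univ _ (fun _ => (1:ℝ)),
      Finset.sum_ite_eq' Finset.univ _ (fun _ => (1:ℝ))]
    simp
  · rw [Finset.sum_congr rfl (fun a _ => if_neg hc), Finset.sum_const, smul_zero]

lemma Af_leaf (hk : 2 ≤ k) (hd2 : d0 ≤ r) :
    Af k r d0 hd1 (⟨⟨r, by omega⟩, fun i => ⟨0, by show 0 < k; omega⟩⟩ :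
      BVertex (fun _ => k) r) = 1 := by
  rw [Af, dif_pos (show d0 ≤ r from hd2)]
  rw [if_pos (fun i pf hi => rfl)]
  norm_num

end Tree3

section Tree4
variable {k r : ℕ} {lam : ℝ}

lemma sibling_eigen (hk : 2 ≤ k) (h' : ℕ) (hh : h' + 1 ≤ r)
    (hroot : (Ppoly k (h'+2)).eval lam = 0) : IsAdjEigenvalue (fun _ => k) r lam := by
  obtain ⟨d0, hd0⟩ : ∃ d0, d0 = r - h' := ⟨_, rfl⟩
  have hd1 : 1 ≤ d0 := by omega
  have hd2 : d0 ≤ r := by omega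
  refine ⟨fun x => Af k r d0 hd1 x * (Ppoly k (h' + 1 - ((x.1 : ℕ) - d0))).eval lam, ?_, ?_⟩
  · intro hz
    have h1 := congrFun hz (⟨⟨r, by omega⟩, fun i => ⟨0, by show 0 < k; omega⟩⟩ :
      BVertex (fun _ => k) r)
    simp only [Pi.zero_apply] at h1
    have h2 : Af k r d0 hd1 (⟨⟨r, by omega⟩, fun i => ⟨0, by show 0 < k; omega⟩⟩ :
        BVertex (fun _ => k) r) * (Ppoly k (h' + 1 - (r - d0))).eval lam = 0 := h1
    rw [Af_leaf hk hd2, show h' + 1 - (r - d0) = 1 by omega, peval1] at h2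
    norm_num at h2
  · funext x
    rw [sum_adj]
    simp only [Pi.smul_apply, smul_eq_mul]
    have hx := x.1.isLt
    rcases Nat.lt_or_ge (x.1 : ℕ) d0 with hlow | hge
    · rw [Af_low x hlow, zero_mul, mul_zero]
      have hpz : (if hm : 0 < (x.1:ℕ) then Af k r d0 hd1 (par x hm)
          * (Ppoly k (h' + 1 - (((par x hm).1 : ℕ) - d0))).eval lam else 0) = 0 := by
        by_cases hp : 0 < (x.1:ℕ)
        · rw [dif_pos hp, Af_low (par x hp) (by rw [par_fst]; omega), zero_mul]
        · rw [dif_neg hp]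
      rw [hpz, zero_add]
      by_cases hm' : (x.1:ℕ) < r
      · rw [dif_pos hm']
        by_cases heq : (x.1:ℕ) + 1 = d0
        · rw [Finset.sum_congr rfl (fun a _ => by rw [chld_fst])]
          rw [← Finset.sum_mul, Af_sum_chld hk x heq hm', zero_mul]
        · rw [Finset.sum_congr rfl (fun a (_ : a ∈ Finset.univ) =>
            by rw [Af_low (chld x hm' a) (by rw [chld_fst]; omega), zero_mul])]
          simp
      · rw [dif_neg hm']
    · have hp : 0 < (x.1:ℕ) := by omega
      rw [dif_pos hp]
      by_cases hm' : (x.1:ℕ) < r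
      · rw [dif_pos hm']
        rw [Finset.sum_congr rfl (fun a (_ : a ∈ Finset.univ) =>
          by rw [Af_chld x hge hm' a, chld_fst])]
        rw [Finset.sum_const, Finset.card_univ, Fintype.card_fin, nsmul_eq_mul]
        by_cases hdm : d0 + 1 ≤ (x.1:ℕ)
        · rw [Af_par x hdm hp, par_fst]
          have E := pevalrec (k := k) (lam := lam) (h' - ((x.1:ℕ) - d0))
          rw [show h' + 1 - ((x.1:ℕ) - 1 - d0) = (h' - ((x.1:ℕ) - d0)) + 2 from by omega,
            show h' + 1 - ((x.1:ℕ) + 1 - d0) = h' - ((x.1:ℕ) - d0) from by omega,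
            show h' + 1 - ((x.1:ℕ) - d0) = (h' - ((x.1:ℕ) - d0)) + 1 from by omega]
          linear_combination (Af k r d0 hd1 x) * E
        · have hdm' : (x.1:ℕ) = d0 := by omega
          rw [Af_low (par x hp) (by rw [par_fst]; omega), zero_mul, zero_add]
          rw [show h' + 1 - ((x.1:ℕ) + 1 - d0) = h' from by omega,
            show h' + 1 - ((x.1:ℕ) - d0) = h' + 1 from by omega]
          have E := pevalrec (k := k) (lam := lam) h'
          rw [hroot] at E
          linear_combination (Af k r d0 hd1 x) * E
      · rw [dif_neg hm']
        have hmr : (x.1:ℕ) = r := by omega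
        by_cases hdm : d0 + 1 ≤ (x.1:ℕ)
        · rw [Af_par x hdm hp, par_fst]
          rw [show h' + 1 - ((x.1:ℕ) - 1 - d0) = 2 from by omega,
            show h' + 1 - ((x.1:ℕ) - d0) = 1 from by omega, peval1]
          have E := pevalrec (k := k) (lam := lam) 0
          rw [show (0:ℕ)+2 = 2 from rfl, show (0:ℕ)+1 = 1 from rfl, peval0, peval1] at E
          linear_combination (Af k r d0 hd1 x) * E
        · have h0 : h' = 0 := by omega
          rw [Af_low (par x hp) (by rw [par_fst]; omega), zero_mul, add_zero]
          rw [show h' + 1 - ((x.1:ℕ) - d0) = 1 from by omega, peval1]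
          have E := pevalrec (k := k) (lam := lam) 0
          rw [show (0:ℕ)+2 = 2 from rfl, show (0:ℕ)+1 = 1 from rfl, peval0, peval1] at E
          rw [h0] at hroot
          rw [show (0:ℕ)+2 = 2 from rfl] at hroot
          rw [hroot] at E
          linear_combination (Af k r d0 hd1 x) * E
end Tree4

section Tree5
variable {k r : ℕ} {lam : ℝ}

lemma eigen_root (hk : 2 ≤ k) (hr : 1 ≤ r)
    (hev : IsAdjEigenvalue (fun _ => k) r lam) :
    ∃ s : ℕ, 2 ≤ s ∧ s ≤ r + 2 ∧ (Ppoly k s).IsRoot lam := by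
  by_contra hno
  push_neg at hno
  have hnz : ∀ s, 1 ≤ s → s ≤ r + 2 → (Ppoly k s).eval lam ≠ 0 := by
    intro s h1 h2
    rcases eq_or_lt_of_le h1 with h | h
    · rw [← h, peval1]; norm_num
    · exact hno s (by omega) h2
  obtain ⟨v, hv0, hv⟩ := hev
  have heig : ∀ x : BVertex (fun _ => k) r,
      (if hm : 0 < (x.1:ℕ) then v (par x hm) else 0) +
      (if hm : (x.1:ℕ) < r then ∑ a : Fin k, v (chld x hm a) else 0) = lam * v x := by
    intro x
    have h1 := congrFun hv x
    rw [sum_adj] at h1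
    simpa using h1
  have step1 : ∀ h', h' + 1 ≤ r → ∀ x : BVertex (fun _ => k) r, (x.1:ℕ) + h' = r →
      ∀ hm : 0 < (x.1:ℕ),
      (Ppoly k (h'+2)).eval lam * v x = (Ppoly k (h'+1)).eval lam * v (par x hm) := by
    intro h'
    induction h' with
    | zero =>
      intro hh x hx hm
      have he := heig x
      rw [dif_pos hm, dif_neg (show ¬ (x.1:ℕ) < r by omega), add_zero] at he
      have E := pevalrec (k := k) (lam := lam) 0
      rw [peval0, peval1] at E
      rw [show (0:ℕ)+2 = 0+2 from rfl, show (0:ℕ)+1 = 1 from rfl, peval1]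
      linear_combination (v x) * E - he
    | succ n ih =>
      intro hh x hx hm
      have he := heig x
      have hxr : (x.1:ℕ) < r := by omega
      rw [dif_pos hm, dif_pos hxr] at he
      have hch : ∀ a : Fin k, (Ppoly k (n+2)).eval lam * v (chld x hxr a)
          = (Ppoly k (n+1)).eval lam * v x := by
        intro a
        have h2 := ih (by omega) (chld x hxr a) (by rw [chld_fst]; omega)
          (by rw [chld_fst]; omega)
        rwa [par_chld] at h2
      have hsum : (Ppoly k (n+2)).eval lam * (∑ a : Fin k, v (chld x hxr a))
          = (k : ℝ) * ((Ppoly k (n+1)).eval lam * v x) := by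
        rw [Finset.mul_sum, Finset.sum_congr rfl (fun a _ => hch a), Finset.sum_const,
          Finset.card_univ, Fintype.card_fin, nsmul_eq_mul]
      have E := pevalrec (k := k) (lam := lam) (n+1)
      linear_combination (v x) * E - ((Ppoly k (n+2)).eval lam) * he + hsum
  have zero_lvl : ∀ m, ∀ x : BVertex (fun _ => k) r, (x.1:ℕ) = m → v x = 0 := by
    intro m
    induction m with
    | zero =>
      intro x hx0
      have he := heig x
      rw [dif_neg (show ¬ 0 < (x.1:ℕ) by omega),
        dif_pos (show (x.1:ℕ) < r by omega)] at he
      have hch : ∀ a : Fin k, (Ppoly k (r+1)).eval lam * v (chld x (by omega) a)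
          = (Ppoly k r).eval lam * v x := by
        intro a
        have h2 := step1 (r-1) (by omega) (chld x (by omega) a)
          (by rw [chld_fst]; omega) (by rw [chld_fst]; omega)
        rw [par_chld] at h2
        rwa [show r-1+2 = r+1 from by omega, show r-1+1 = r from by omega] at h2
      have hsum : (Ppoly k (r+1)).eval lam *
            (∑ a : Fin k, v (chld x (show (x.1:ℕ) < r by omega) a))
          = (k : ℝ) * ((Ppoly k r).eval lam * v x) := by
        rw [Finset.mul_sum, Finset.sum_congr rfl (fun a _ => hch a), Finset.sum_const,
          Finset.card_univ, Fintype.card_fin, nsmul_eq_mul]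
      have E := pevalrec (k := k) (lam := lam) r
      have hz : (Ppoly k (r+2)).eval lam * v x = 0 := by
        linear_combination (v x) * E - ((Ppoly k (r+1)).eval lam) * he + hsum
      exact (mul_eq_zero.mp hz).resolve_left (hnz (r+2) (by omega) (by omega))
    | succ n ih =>
      intro x hx
      have hlt := x.1.isLt
      have hm : 0 < (x.1:ℕ) := by omega
      have hs := step1 (r - (n+1)) (by omega) x (by omega) hm
      have hpar0 : v (par x hm) = 0 := ih (par x hm) (by rw [par_fst]; omega)
      rw [hpar0, mul_zero] at hs
      exact (mul_eq_zero.mp hs).resolve_left (hnz (r - (n+1) + 2) (by omega) (by omega))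
  exact hv0 (funext fun x => zero_lvl (x.1:ℕ) x rfl)

end Tree5


/-- For integers `k ≥ 2` and `r ≥ 1`, a real number `lam` is an
eigenvalue of the adjacency matrix of the `k`-ary rooted tree `X_r^k` iff `lam`
is a root of `P^k_s` for some `2 ≤ s ≤ r + 2`. -/
theorem adj_spectrum_kary_tree (k r : ℕ) (hk : 2 ≤ k) (hr : 1 ≤ r) (lam : ℝ) :
    IsAdjEigenvalue (fun _ => k) r lam ↔
      ∃ s : ℕ, 2 ≤ s ∧ s ≤ r + 2 ∧ (Ppoly k s).IsRoot lam := by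
  constructor
  · exact eigen_root hk hr
  · rintro ⟨s, hs2, hsr, hroot⟩
    rcases eq_or_lt_of_le hsr with heq | hlt
    · rw [heq] at hroot
      exact radial_eigen (by omega) hr hroot
    · refine sibling_eigen hk (s - 2) (by omega) ?_
      rw [show s - 2 + 2 = s from by omega]
      exact hroot
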